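/- arXiv:1905.10540 — 3 statements merged into one kernel-verified Lean document; each statement's English description precedes it below -/
import Mathlib

section
/- Let v_1, ..., v_n ∈ R^p be pairwise distinct, let Δ = (1/2)·min_{j≠k} ‖v_j - v_k‖², and suppose σ_0² ≥ Δ / (log(n²) - log(n² - 1)). Then for every i with 1 ≤ i ≤ n, the function α(v) = Σ_{k=1}^n k·exp(-‖v - v_k‖²/(2σ_0²)) satisfies α(v_i) > n(n+1)/2 - (i+1). -/
/-!
The bandwidth condition says exactly that every Gaussian weight `exp (-‖v_i - v_k‖² / (2σ₀²))`
is at least `1 - 1/n²` (for `k = i` it is `1`). Hence `α(v_i) ≥ (1 - 1/n²) · n(n+1)/2`, and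
`n(n+1)/(2n²) ≤ 1 < i + 1`.
-/

open Real

theorem Fin.sum_val_add_one (n : ℕ) : ∑ k : Fin n, ((k : ℝ) + 1) = n * (n + 1) / 2 := by
  induction n with
  | zero => simp
  | succ m ih =>
    rw [Fin.sum_univ_castSucc]
    simp only [Fin.val_castSucc, Fin.val_last, ih]
    push_cast
    ring

theorem le_exp_neg_div_of_le_mul_neg_log {c x s : ℝ} (hc : 0 < c) (hs : 0 < s)
    (h : x ≤ s * -log c) : c ≤ exp (-x / s) := by
  rw [← exp_log hc, exp_le_exp, le_div_iff₀ hs]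
  linarith

theorem triangular_sub_lt_mul_one_sub_inv_sq {n t : ℝ} (hn : 1 ≤ n) (ht : 1 < t) :
    n * (n + 1) / 2 - t < n * (n + 1) / 2 * ((n ^ 2 - 1) / n ^ 2) := by
  rw [mul_div_assoc', lt_div_iff₀ (by positivity)]
  nlinarith [mul_lt_mul_of_pos_right ht (show 0 < n ^ 2 by positivity)]

theorem stmt_1_general (p n : ℕ) (v : Fin n → EuclideanSpace ℝ (Fin p))
    (σ₀ : ℝ) (hσ₀ : 0 < σ₀)
    (hσ : ∀ j k : Fin n, j ≠ k →
      σ₀ ^ 2 * (Real.log ((n : ℝ) ^ 2) - Real.log ((n : ℝ) ^ 2 - 1)) ≥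
        (1 / 2) * ‖v j - v k‖ ^ 2) :
    ∀ i : Fin n,
      (∑ k : Fin n, ((k : ℝ) + 1) * Real.exp (-‖v i - v k‖ ^ 2 / (2 * σ₀ ^ 2))) >
        (n : ℝ) * ((n : ℝ) + 1) / 2 - ((i : ℝ) + 2) := by
  intro i
  have hn : (1 : ℝ) ≤ n := by exact_mod_cast i.pos
  have hkernel : ∀ k, ((n : ℝ) ^ 2 - 1) / n ^ 2 ≤ exp (-‖v i - v k‖ ^ 2 / (2 * σ₀ ^ 2)) := by
    intro k
    rcases eq_or_ne k i with rfl | hki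
    · simp only [sub_self, norm_zero, ne_eq, OfNat.ofNat_ne_zero, not_false_eq_true, zero_pow,
        neg_zero, zero_div, exp_zero]
      exact div_le_one_of_le₀ (by linarith) (by positivity)
    · have hn2 : (2 : ℝ) ≤ n := by
        have := Fin.val_ne_of_ne hki
        exact_mod_cast (by omega : 2 ≤ n)
      have hpos : (0 : ℝ) < n ^ 2 - 1 := by nlinarith
      refine le_exp_neg_div_of_le_mul_neg_log (div_pos hpos (by positivity)) (by positivity) ?_
      rw [log_div hpos.ne' (by positivity)]
      linarith [hσ i k hki.symm]
  calc (n : ℝ) * (n + 1) / 2 - (i + 2)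
      < n * (n + 1) / 2 * ((n ^ 2 - 1) / n ^ 2) :=
        triangular_sub_lt_mul_one_sub_inv_sq hn (by linarith [(i : ℕ).cast_nonneg (α := ℝ)])
    _ = ∑ k : Fin n, ((k : ℝ) + 1) * ((n ^ 2 - 1) / n ^ 2) := by
        rw [← Finset.sum_mul, Fin.sum_val_add_one]
    _ ≤ _ := Finset.sum_le_sum fun k _ => mul_le_mul_of_nonneg_left (hkernel k) (by positivity)

/-- For pairwise distinct `v 1, …, v n` in `ℝ^p`, with
`Δ = (1/2) min_{j≠k} ‖v_j - v_k‖²` and `σ₀² ≥ Δ / (log(n²) - log(n²-1))`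
(stated in multiplied form `σ₀² (log n² - log(n²-1)) ≥ (1/2)‖v_j - v_k‖²` for all `j ≠ k`),
the Gaussian score satisfies `α(v_i) > n(n+1)/2 - (i+1)` for each `1 ≤ i ≤ n`
(here `i : Fin n` represents the 1-indexed index `i+1`, so the bound is
`n(n+1)/2 - ((i : ℝ) + 2)`). -/
theorem stmt_1 (p n : ℕ) (v : Fin n → EuclideanSpace ℝ (Fin p))
    (hv : Function.Injective v) (σ₀ : ℝ) (hσ₀ : 0 < σ₀)
    (hσ : ∀ j k : Fin n, j ≠ k →
      σ₀ ^ 2 * (Real.log ((n : ℝ) ^ 2) - Real.log ((n : ℝ) ^ 2 - 1)) ≥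
        (1 / 2) * ‖v j - v k‖ ^ 2) :
    ∀ i : Fin n,
      (∑ k : Fin n, ((k : ℝ) + 1) * Real.exp (-‖v i - v k‖ ^ 2 / (2 * σ₀ ^ 2))) >
        (n : ℝ) * ((n : ℝ) + 1) / 2 - ((i : ℝ) + 2) :=
  stmt_1_general p n v σ₀ hσ₀ hσ
end

section
/- Let T be a full binary tree (every internal node has exactly two children) with N internal nodes, N ≥ 1, and let l_1, ..., l_{N+1} be the depths (root-to-leaf path lengths) of its N+1 leaves. Then for every constant C with 0 < C < 1/2, Σ_{k=1}^{N+1} C^{l_k} ≤ C^N + Σ_{k=1}^{N} C^k. -/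
/-!
Let `w n = C ^ n + ∑_{k=1}^n C ^ k` be the weight `∑ C ^ l` of the caterpillar with `n` internal
nodes, whose leaves have depths `1, …, n, n`. Then `w (n + 1) = C * (1 + w n)` and
`w n = 1 - (1 - 2C) ∑_{k<n} C ^ k`, so subadditivity of geometric partial sums gives
`w a + w b ≤ 1 + w (a + b)` for `0 ≤ C ≤ 1/2`. Splitting a tree at its root, the weight of
`node A B` is `C * (weight A + weight B) ≤ C * (w a + w b) ≤ C * (1 + w (a + b))`, which is
`w (a + b + 1)`.
-/

/-- A full binary tree: every node has exactly 0 or 2 children. -/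
inductive FBT where
  | leaf : FBT
  | node : FBT → FBT → FBT

/-- Number of internal nodes of a full binary tree. -/
def FBT.internals : FBT → ℕ
  | .leaf => 0
  | .node a b => a.internals + b.internals + 1

/-- The list of root-to-leaf depths (edge counts) of all leaves. -/
def FBT.depths : FBT → List ℕ
  | .leaf => [0]
  | .node a b => a.depths.map (· + 1) ++ b.depths.map (· + 1)

open Finset

noncomputable def caterpillarWeight (C : ℝ) (n : ℕ) : ℝ := C ^ n + ∑ k ∈ Icc 1 n, C ^ k

theorem geom_sum_range_add_le {C : ℝ} (hC0 : 0 ≤ C) (hC1 : C ≤ 1) (a b : ℕ) :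
    ∑ k ∈ range (a + b), C ^ k ≤ ∑ k ∈ range a, C ^ k + ∑ k ∈ range b, C ^ k := by
  rw [sum_range_add]
  exact add_le_add_right
    (sum_le_sum fun k _ => pow_le_pow_of_le_one hC0 hC1 (Nat.le_add_left k a)) _

namespace caterpillarWeight

theorem eq_one_add_geom_sum (C : ℝ) (n : ℕ) :
    caterpillarWeight C n = 1 + (2 * C - 1) * ∑ k ∈ range n, C ^ k := by
  induction n with
  | zero => simp [caterpillarWeight]
  | succ n ih =>
    rw [sum_range_succ, mul_add, ← add_assoc, ← ih, caterpillarWeight, caterpillarWeight,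
      sum_Icc_succ_top (by omega)]
    ring

theorem succ (C : ℝ) (n : ℕ) :
    caterpillarWeight C (n + 1) = C * (1 + caterpillarWeight C n) := by
  rw [eq_one_add_geom_sum, eq_one_add_geom_sum, geom_sum_succ]
  ring

theorem add_le {C : ℝ} (hC0 : 0 ≤ C) (hC : C ≤ 1 / 2) (a b : ℕ) :
    caterpillarWeight C a + caterpillarWeight C b ≤ 1 + caterpillarWeight C (a + b) := by
  simp only [eq_one_add_geom_sum]
  have := mul_le_mul_of_nonpos_left (geom_sum_range_add_le hC0 (by linarith) a b)
    (by linarith : 2 * C - 1 ≤ 0)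
  linarith

end caterpillarWeight

namespace FBT

theorem sum_pow_depths_node (C : ℝ) (A B : FBT) :
    ((node A B).depths.map fun l => C ^ l).sum =
      C * ((A.depths.map fun l => C ^ l).sum + (B.depths.map fun l => C ^ l).sum) := by
  simp only [depths, List.map_append, List.map_map, List.sum_append, Function.comp_def, pow_succ',
    List.sum_map_mul_left, mul_add]

theorem sum_pow_depths_le {C : ℝ} (hC0 : 0 ≤ C) (hC : C ≤ 1 / 2) (T : FBT) :
    (T.depths.map fun l => C ^ l).sum ≤ caterpillarWeight C T.internals := by
  induction T with
  | leaf => simp [depths, internals, caterpillarWeight]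
  | node A B ihA ihB =>
    rw [sum_pow_depths_node, internals, caterpillarWeight.succ]
    refine mul_le_mul_of_nonneg_left ?_ hC0
    calc _ ≤ caterpillarWeight C A.internals + caterpillarWeight C B.internals :=
          add_le_add ihA ihB
      _ ≤ 1 + caterpillarWeight C (A.internals + B.internals) :=
        caterpillarWeight.add_le hC0 hC _ _

end FBT

theorem stmt_3_general (T : FBT) (N : ℕ) (hN : T.internals = N)
    (C : ℝ) (hC0 : 0 < C) (hC : C < 1 / 2) :
    (T.depths.map fun l => C ^ l).sum ≤ C ^ N + ∑ k ∈ Finset.Icc 1 N, C ^ k :=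
  hN ▸ FBT.sum_pow_depths_le hC0.le hC.le T

/-- For a full binary tree with `N ≥ 1` internal nodes and leaf depths
`l_1, …, l_{N+1}`, and every `0 < C < 1/2`:
`∑_{k=1}^{N+1} C^{l_k} ≤ C^N + ∑_{k=1}^N C^k`. -/
theorem stmt_3 (T : FBT) (N : ℕ) (hN : T.internals = N) (hN1 : 1 ≤ N)
    (C : ℝ) (hC0 : 0 < C) (hC : C < 1 / 2) :
    (T.depths.map fun l => C ^ l).sum ≤ C ^ N + ∑ k ∈ Finset.Icc 1 N, C ^ k :=
  stmt_3_general T N hN C hC0 hC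
end

section
/- Suppose h_t ∈ R^p depends on h_{t-1} only through the leaves of a full binary tree with N internal nodes in which at most all N+1 leaves equal h_{t-1}, and along every root-to-leaf path P^k = [P_0^k, ..., P_{l_k}^k] each parent-to-child Jacobian satisfies ‖∂P_j^k/∂P_{j-1}^k‖ ≤ C₀ with 0 < C₀ < 1/2. Then ‖∂h_t/∂h_{t-1}‖ ≤ Σ_{k=1}^{N+1} C₀^{l_k} ≤ 1/2 + C₀ < 1. -/
/-!
Each leaf of depth `l` contributes a product of `l` Jacobians, of norm at most `C₀ ^ l`. The Kraft
sum `∑ₖ C₀ ^ lₖ` of a full binary tree is at most `1` when `C₀ ≤ 1/2`, since the two subtrees of a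
node each contribute at most `1`, scaled by `C₀`. A tree with at least one internal node is a node
whose subtrees give at most `2 C₀ ≤ 1/2 + C₀ < 1`.
-/

theorem ContinuousLinearMap.norm_list_prod_le_pow {𝕜 E : Type*} [NontriviallyNormedField 𝕜]
    [SeminormedAddCommGroup E] [NormedSpace 𝕜 E] {C : ℝ} :
    ∀ {L : List (E →L[𝕜] E)}, (∀ A ∈ L, ‖A‖ ≤ C) → ‖L.prod‖ ≤ C ^ L.length
  | [], _ => by rw [List.prod_nil, List.length_nil, pow_zero]; exact norm_id_le
  | A :: L, hL => by
    have hA : ‖A‖ ≤ C := hL A List.mem_cons_self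
    have hrest := norm_list_prod_le_pow fun B hB => hL B (List.mem_cons_of_mem A hB)
    calc ‖A * L.prod‖ ≤ ‖A‖ * ‖L.prod‖ := norm_mul_le _ _
      _ ≤ C * C ^ L.length := mul_le_mul hA hrest (norm_nonneg _) ((norm_nonneg A).trans hA)
      _ = C ^ (A :: L).length := (pow_succ' C _).symm

namespace FBT

theorem sum_pow_depths_node_s13 {R : Type*} [CommSemiring R] (c : R) (a b : FBT) :
    ((node a b).depths.map (c ^ ·)).sum =
      c * ((a.depths.map (c ^ ·)).sum + (b.depths.map (c ^ ·)).sum) := by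
  simp only [depths, List.map_append, List.map_map, List.sum_append, Function.comp_def, pow_succ',
    List.sum_map_mul_left, mul_add]

theorem sum_pow_depths_le_one {c : ℝ} (hc0 : 0 ≤ c) (hc : c ≤ 1 / 2) :
    ∀ T : FBT, (T.depths.map (c ^ ·)).sum ≤ 1
  | leaf => by simp [depths]
  | node a b => by
    rw [sum_pow_depths_node_s13]
    have ha := sum_pow_depths_le_one hc0 hc a
    have hb := sum_pow_depths_le_one hc0 hc b
    nlinarith

theorem sum_pow_depths_le_two_mul {c : ℝ} (hc0 : 0 ≤ c) (hc : c ≤ 1 / 2) {T : FBT}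
    (hT : 1 ≤ T.internals) : (T.depths.map (c ^ ·)).sum ≤ 2 * c := by
  cases T with
  | leaf => simp [internals] at hT
  | node a b =>
    rw [sum_pow_depths_node_s13]
    have ha := sum_pow_depths_le_one hc0 hc a
    have hb := sum_pow_depths_le_one hc0 hc b
    nlinarith

end FBT

/-- Suppose `h_t` depends on `h_{t-1}` only through the leaves of a full
binary tree with `N ≥ 1` internal nodes (so a subset `S` of the `N+1` leaves equals
`h_{t-1}`), and along the root-to-leaf path to leaf `k` each parent-to-child Jacobian
(modeled as the operators in the list `mats k`, of length the depth `l_k`) has norm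
at most `C₀` with `0 < C₀ < 1/2`.  The total Jacobian is
`J = ∑_{k ∈ S} (product of Jacobians along path k)`, and
`‖J‖ ≤ ∑_{k=1}^{N+1} C₀^{l_k} ≤ 1/2 + C₀ < 1`. -/
theorem stmt_13 (p : ℕ) (T : FBT) (hN1 : 1 ≤ T.internals)
    (C₀ : ℝ) (hC0 : 0 < C₀) (hC : C₀ < 1 / 2)
    (mats : Fin T.depths.length →
      List (EuclideanSpace ℝ (Fin p) →L[ℝ] EuclideanSpace ℝ (Fin p)))
    (hlen : ∀ k, (mats k).length = T.depths.get k)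
    (hnorm : ∀ k, ∀ A ∈ mats k, ‖A‖ ≤ C₀)
    (S : Finset (Fin T.depths.length))
    (J : EuclideanSpace ℝ (Fin p) →L[ℝ] EuclideanSpace ℝ (Fin p))
    (hJ : J = ∑ k ∈ S, (mats k).prod) :
    ‖J‖ ≤ (∑ k : Fin T.depths.length, C₀ ^ T.depths.get k) ∧
      (∑ k : Fin T.depths.length, C₀ ^ T.depths.get k) ≤ 1 / 2 + C₀ ∧
      (1 / 2 + C₀ : ℝ) < 1 := by
  have hsum_list : ∑ k : Fin T.depths.length, C₀ ^ T.depths.get k = (T.depths.map (C₀ ^ ·)).sum := by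
    simp only [List.get_eq_getElem, Fin.sum_univ_fun_getElem]
  refine ⟨?_, ?_, by linarith⟩
  · calc ‖J‖ ≤ ∑ k ∈ S, ‖(mats k).prod‖ := hJ ▸ norm_sum_le _ _
      _ ≤ ∑ k ∈ S, C₀ ^ T.depths.get k := Finset.sum_le_sum fun k _ =>
          hlen k ▸ ContinuousLinearMap.norm_list_prod_le_pow (hnorm k)
      _ ≤ ∑ k, C₀ ^ T.depths.get k :=
          Finset.sum_le_sum_of_subset_of_nonneg S.subset_univ fun k _ _ => by positivity
  · rw [hsum_list]
    linarith [FBT.sum_pow_depths_le_two_mul hC0.le hC.le hN1]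
end
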